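/- Let d ≥ 1. Let Θ and L be independent random variables where Θ is uniformly distributed on the unit sphere S^{d−1} ⊂ ℝ^d and L is a nonnegative real random variable with the BetaPrime(d/2, 1/2) distribution, i.e. with density x ↦ x^{d/2−1}(1+x)^{−(d+1)/2} / B(d/2, 1/2) on x ≥ 0. Then the ℝ^d-valued random vector √L · Θ has the multivariate Cauchy(0_d, I_d) distribution; that is, its law has density Γ((d+1)/2) π^{−(d+1)/2} (1 + ‖x‖²)^{−(d+1)/2} with respect to Lebesgue measure on ℝ^d. -/

import Mathlib

open MeasureTheory ProbabilityTheory Real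

/-- The uniform (normalized surface) probability measure on the unit sphere
`S^{d-1} ⊂ ℝ^d`. -/
noncomputable def uniformSphere (d : ℕ) :
    Measure (Metric.sphere (0 : EuclideanSpace ℝ (Fin d)) 1) :=
  ((volume : Measure (EuclideanSpace ℝ (Fin d))).toSphere Set.univ)⁻¹ •
    (volume : Measure (EuclideanSpace ℝ (Fin d))).toSphere

/-- The `BetaPrime(a, b)` distribution: the probability measure on `[0,∞)` with density
`x ↦ x^{a-1}(1+x)^{-a-b}/B(a,b)`, where `B(a,b) = Γ(a)Γ(b)/Γ(a+b)`. -/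
noncomputable def betaPrime (a b : ℝ) : Measure ℝ :=
  volume.withDensity fun x => ENNReal.ofReal
    (Set.indicator (Set.Ici 0)
      (fun x => x ^ (a - 1) * (1 + x) ^ (-a - b) /
        (Real.Gamma a * Real.Gamma b / Real.Gamma (a + b))) x)

/-- The (isotropic) multivariate Cauchy distribution `Cauchy(0_d, I_d)` on `ℝ^d`:
density `Γ((d+1)/2) π^{-(d+1)/2} (1 + ‖x‖²)^{-(d+1)/2}`. -/
noncomputable def multivariateCauchyStd (d : ℕ) : Measure (EuclideanSpace ℝ (Fin d)) :=
  volume.withDensity fun x => ENNReal.ofReal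
    (Real.Gamma (((d : ℝ) + 1) / 2) * Real.pi ^ (-(((d : ℝ) + 1) / 2)) *
      (1 + ‖x‖ ^ 2) ^ (-(((d : ℝ) + 1) / 2)))

section Aux

open Set Metric
open scoped ENNReal

lemma aux_toSphere_univ (d : ℕ) (hd : 1 ≤ d) :
    (volume : Measure (EuclideanSpace ℝ (Fin d))).toSphere Set.univ
      = ENNReal.ofReal (2 * π ^ ((d : ℝ) / 2) / Real.Gamma ((d : ℝ) / 2)) := by
  have hdim : Module.finrank ℝ (EuclideanSpace ℝ (Fin d)) = d := finrank_euclideanSpace_fin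
  haveI : Nonempty (Fin d) := ⟨⟨0, hd⟩⟩
  rw [Measure.toSphere_apply_univ, EuclideanSpace.volume_ball, hdim]
  have hcard : Fintype.card (Fin d) = d := Fintype.card_fin d
  rw [hcard]
  have hd2 : (0:ℝ) < (d : ℝ) / 2 := by positivity
  have hΓ : 0 < Real.Gamma ((d : ℝ) / 2) := Real.Gamma_pos_of_pos hd2
  have h1 : (Real.sqrt π : ℝ) ^ d = π ^ ((d : ℝ) / 2) := by
    rw [Real.sqrt_eq_rpow, ← Real.rpow_natCast (π ^ ((1:ℝ)/2)) d, ← Real.rpow_mul pi_pos.le]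
    norm_num
    ring_nf
  have h2 : Real.Gamma ((d : ℝ) / 2 + 1) = ((d : ℝ) / 2) * Real.Gamma ((d : ℝ) / 2) :=
    Real.Gamma_add_one hd2.ne'
  rw [ENNReal.ofReal_one, one_pow, one_mul, h1, h2,
    show ((d : ℝ≥0∞)) = ENNReal.ofReal (d : ℝ) by simp,
    ← ENNReal.ofReal_mul (by positivity)]
  congr 1
  have hd0 : (0:ℝ) < (d:ℝ) := by exact_mod_cast hd
  field_simp

lemma aux_mass_pos (d : ℕ) (hd : 1 ≤ d) :
    (0:ℝ) < 2 * π ^ ((d : ℝ) / 2) / Real.Gamma ((d : ℝ) / 2) := by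
  have hd2 : (0:ℝ) < (d : ℝ) / 2 := by positivity
  have hΓ : 0 < Real.Gamma ((d : ℝ) / 2) := Real.Gamma_pos_of_pos hd2
  positivity

lemma aux_prob (d : ℕ) (hd : 1 ≤ d) : IsProbabilityMeasure (uniformSphere d) := by
  constructor
  rw [uniformSphere, Measure.smul_apply, smul_eq_mul, aux_toSphere_univ d hd]
  exact ENNReal.inv_mul_cancel (by simp [aux_mass_pos d hd]) ENNReal.ofReal_ne_top

lemma aux_sq_image : (fun r : ℝ => r ^ 2) '' Ioi 0 = Ioi 0 := by
  ext x
  constructor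
  · rintro ⟨r, hr, rfl⟩
    exact pow_pos (show (0:ℝ) < r from hr) 2
  · intro hx
    exact ⟨Real.sqrt x, Real.sqrt_pos.2 hx, Real.sq_sqrt (le_of_lt hx)⟩

lemma aux_real (d : ℕ) (hd : 1 ≤ d) (r : ℝ) (hr : 0 < r) :
    |2 * r| * ((r ^ 2) ^ ((d : ℝ) / 2 - 1) * (1 + r ^ 2) ^ (-((d : ℝ) / 2) - 1 / 2) /
        (Real.Gamma ((d : ℝ) / 2) * Real.Gamma (1 / 2) / Real.Gamma ((d : ℝ) / 2 + 1 / 2))) *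
      (2 * π ^ ((d : ℝ) / 2) / Real.Gamma ((d : ℝ) / 2))⁻¹ =
    r ^ (d - 1) * (Real.Gamma (((d : ℝ) + 1) / 2) * π ^ (-(((d : ℝ) + 1) / 2)) *
      (1 + r ^ 2) ^ (-(((d : ℝ) + 1) / 2))) := by
  have hd2 : (0:ℝ) < (d : ℝ) / 2 := by positivity
  have hG1 : 0 < Real.Gamma ((d : ℝ) / 2) := Real.Gamma_pos_of_pos hd2
  have hG2 : 0 < Real.Gamma (((d : ℝ) + 1) / 2) := Real.Gamma_pos_of_pos (by positivity)
  have habs : |2 * r| = 2 * r := abs_of_pos (by linarith)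
  have hhalf : (d : ℝ) / 2 + 1 / 2 = ((d : ℝ) + 1) / 2 := by ring
  have hexp : -((d : ℝ) / 2) - 1 / 2 = -(((d : ℝ) + 1) / 2) := by ring
  have hΓhalf : Real.Gamma (1 / 2) = π ^ ((1:ℝ) / 2) := by
    rw [Real.Gamma_one_half_eq, Real.sqrt_eq_rpow]
  have hA : (0:ℝ) < π ^ ((d : ℝ) / 2) := Real.rpow_pos_of_pos pi_pos _
  have hB : (0:ℝ) < π ^ ((1:ℝ) / 2) := Real.rpow_pos_of_pos pi_pos _
  have hpow1 : (r ^ 2) ^ ((d : ℝ) / 2 - 1) = r ^ ((d : ℝ) - 2) := by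
    rw [← Real.rpow_natCast r 2, ← Real.rpow_mul hr.le]
    norm_num
    ring_nf
  have hpow2 : (r : ℝ) ^ (d - 1) = r ^ ((d : ℝ) - 1) := by
    rw [← Real.rpow_natCast r (d - 1), Nat.cast_sub hd, Nat.cast_one]
  have hpow3 : r * r ^ ((d : ℝ) - 2) = r ^ ((d : ℝ) - 1) := by
    rw [show r * r ^ ((d : ℝ) - 2) = r ^ ((1:ℝ)) * r ^ ((d : ℝ) - 2) by rw [Real.rpow_one],
      ← Real.rpow_add hr]
    ring_nf
  have hpi : π ^ (-(((d : ℝ) + 1) / 2)) = (π ^ ((d : ℝ) / 2) * π ^ ((1:ℝ) / 2))⁻¹ := by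
    rw [← Real.rpow_add pi_pos, Real.rpow_neg pi_pos.le, hhalf]
  rw [habs, hhalf, hexp, hΓhalf, hpow1, hpow2, hpi, ← hpow3]
  field_simp

lemma aux_cauchy_polar (d : ℕ) (hd : 1 ≤ d) (f : (EuclideanSpace ℝ (Fin d)) → ℝ≥0∞)
    (hf : Measurable f) :
    ∫⁻ x, ENNReal.ofReal
        (Real.Gamma (((d : ℝ) + 1) / 2) * Real.pi ^ (-(((d : ℝ) + 1) / 2)) *
          (1 + ‖x‖ ^ 2) ^ (-(((d : ℝ) + 1) / 2))) * f x ∂(volume) =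
      ∫⁻ θ, (∫⁻ r in Ioi (0:ℝ),
          ENNReal.ofReal (r ^ (d - 1)) *
          (ENNReal.ofReal
            (Real.Gamma (((d : ℝ) + 1) / 2) * Real.pi ^ (-(((d : ℝ) + 1) / 2)) *
              (1 + r ^ 2) ^ (-(((d : ℝ) + 1) / 2))) * f (r • (θ : EuclideanSpace ℝ (Fin d)))))
        ∂((volume : Measure (EuclideanSpace ℝ (Fin d))).toSphere) := by
  haveI : Nontrivial (EuclideanSpace ℝ (Fin d)) := by
    have : 0 < Module.finrank ℝ (EuclideanSpace ℝ (Fin d)) := by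
      rw [finrank_euclideanSpace_fin]; exact hd
    exact Module.nontrivial_of_finrank_pos this
  set c : ℝ → ℝ≥0∞ := fun r => ENNReal.ofReal
    (Real.Gamma (((d : ℝ) + 1) / 2) * Real.pi ^ (-(((d : ℝ) + 1) / 2)) *
      (1 + r ^ 2) ^ (-(((d : ℝ) + 1) / 2))) with hc
  have hcm : Measurable c := by
    apply Measurable.ennreal_ofReal
    exact measurable_const.mul ((measurable_const.add (measurable_id.pow_const 2)).pow_const _)
  have hG : Measurable (fun p : (sphere (0 : EuclideanSpace ℝ (Fin d)) 1) × (Ioi (0:ℝ)) =>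
      c p.2 * f ((p.2 : ℝ) • (p.1 : EuclideanSpace ℝ (Fin d)))) := by
    apply Measurable.mul
    · exact hcm.comp (measurable_subtype_coe.comp measurable_snd)
    · apply hf.comp
      exact ((continuous_subtype_val.comp continuous_snd).smul
        (continuous_subtype_val.comp continuous_fst)).measurable
  have h1 : ∫⁻ x, c ‖x‖ * f x ∂(volume : Measure (EuclideanSpace ℝ (Fin d))) =
      ∫⁻ x : ({0}ᶜ : Set (EuclideanSpace ℝ (Fin d))), c ‖(x:EuclideanSpace ℝ (Fin d))‖ * f x
        ∂((volume : Measure (EuclideanSpace ℝ (Fin d))).comap (↑)) := by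
    rw [lintegral_subtype_comap ((measurableSet_singleton (0 : EuclideanSpace ℝ (Fin d))).compl)
      (fun x => c ‖x‖ * f x), MeasureTheory.restrict_compl_singleton]
  have h2 := (Measure.measurePreserving_homeomorphUnitSphereProd
      (volume : Measure (EuclideanSpace ℝ (Fin d)))).lintegral_comp hG
  have h3 : ∀ x : ({0}ᶜ : Set (EuclideanSpace ℝ (Fin d))),
      c ((homeomorphUnitSphereProd _ x).2 : ℝ) *
        f (((homeomorphUnitSphereProd _ x).2 : ℝ) •
           ((homeomorphUnitSphereProd _ x).1 : EuclideanSpace ℝ (Fin d))) =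
      c ‖(x : EuclideanSpace ℝ (Fin d))‖ * f x := by
    intro x
    have hx : (x : EuclideanSpace ℝ (Fin d)) ≠ 0 := x.2
    simp only [homeomorphUnitSphereProd_apply_fst_coe, homeomorphUnitSphereProd_apply_snd_coe]
    rw [smul_inv_smul₀ (norm_ne_zero_iff.2 hx)]
  have hdim : Module.finrank ℝ (EuclideanSpace ℝ (Fin d)) = d := finrank_euclideanSpace_fin
  show (∫⁻ x, c ‖x‖ * f x ∂(volume : Measure (EuclideanSpace ℝ (Fin d)))) = _
  rw [h1]
  rw [show (∫⁻ x : ({0}ᶜ : Set (EuclideanSpace ℝ (Fin d))),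
        c ‖(x : EuclideanSpace ℝ (Fin d))‖ * f x
        ∂((volume : Measure (EuclideanSpace ℝ (Fin d))).comap (↑))) =
      ∫⁻ x : ({0}ᶜ : Set (EuclideanSpace ℝ (Fin d))),
        c ((homeomorphUnitSphereProd _ x).2 : ℝ) *
          f (((homeomorphUnitSphereProd _ x).2 : ℝ) •
            ((homeomorphUnitSphereProd _ x).1 : EuclideanSpace ℝ (Fin d)))
        ∂((volume : Measure (EuclideanSpace ℝ (Fin d))).comap (↑)) from
    (lintegral_congr fun x => (h3 x).symm)]
  rw [h2, lintegral_prod _ hG.aemeasurable]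
  refine lintegral_congr fun θ => ?_
  have hm1 : Measurable (fun r : (Ioi (0:ℝ)) =>
      ENNReal.ofReal ((r : ℝ) ^ (Module.finrank ℝ (EuclideanSpace ℝ (Fin d)) - 1))) :=
    (measurable_subtype_coe.pow_const _).ennreal_ofReal
  have hm2 : Measurable (fun r : (Ioi (0:ℝ)) =>
      c r * f ((r : ℝ) • (θ : EuclideanSpace ℝ (Fin d)))) :=
    (hcm.comp measurable_subtype_coe).mul
      (hf.comp (continuous_subtype_val.smul continuous_const).measurable)
  rw [Measure.volumeIoiPow, lintegral_withDensity_eq_lintegral_mul _ hm1 hm2]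
  simp only [Pi.mul_apply]
  rw [lintegral_subtype_comap measurableSet_Ioi
    (fun r => ENNReal.ofReal (r ^ (Module.finrank ℝ (EuclideanSpace ℝ (Fin d)) - 1)) *
      (c r * f (r • (θ : EuclideanSpace ℝ (Fin d)))))]
  rw [hdim]

lemma aux_beta_side (d : ℕ) (hd : 1 ≤ d) (f : (EuclideanSpace ℝ (Fin d)) → ℝ≥0∞)
    (hf : Measurable f) :
    ∫⁻ p : ℝ × (Metric.sphere (0 : EuclideanSpace ℝ (Fin d)) 1),
        f (Real.sqrt p.1 • (p.2 : EuclideanSpace ℝ (Fin d)))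
        ∂((betaPrime ((d : ℝ) / 2) (1 / 2)).prod (uniformSphere d)) =
      ∫⁻ r in Ioi (0:ℝ),
        (ENNReal.ofReal |2 * r| *
          (ENNReal.ofReal ((r ^ 2) ^ ((d : ℝ) / 2 - 1) * (1 + r ^ 2) ^ (-((d : ℝ) / 2) - 1 / 2) /
            (Real.Gamma ((d : ℝ) / 2) * Real.Gamma (1 / 2) / Real.Gamma ((d : ℝ) / 2 + 1 / 2))) *
          ((ENNReal.ofReal (2 * π ^ ((d : ℝ) / 2) / Real.Gamma ((d : ℝ) / 2)))⁻¹ *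
            ∫⁻ θ, f (r • (θ : EuclideanSpace ℝ (Fin d)))
              ∂(volume : Measure (EuclideanSpace ℝ (Fin d))).toSphere))) := by
  haveI := aux_prob d hd
  set ν := (volume : Measure (EuclideanSpace ℝ (Fin d))).toSphere with hν
  set C := ENNReal.ofReal (2 * π ^ ((d : ℝ) / 2) / Real.Gamma ((d : ℝ) / 2)) with hC
  have hus : uniformSphere d = C⁻¹ • ν := by rw [uniformSphere, aux_toSphere_univ d hd]
  set q : ℝ → ℝ := fun x => x ^ ((d : ℝ) / 2 - 1) * (1 + x) ^ (-((d : ℝ) / 2) - 1 / 2) /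
    (Real.Gamma ((d : ℝ) / 2) * Real.Gamma (1 / 2) / Real.Gamma ((d : ℝ) / 2 + 1 / 2)) with hq
  have hqm : Measurable q := by
    apply Measurable.div _ measurable_const
    exact (measurable_id.pow_const _).mul ((measurable_const.add measurable_id).pow_const _)
  have hsm : Measurable (fun p : ℝ × (Metric.sphere (0 : EuclideanSpace ℝ (Fin d)) 1) =>
      f (Real.sqrt p.1 • (p.2 : EuclideanSpace ℝ (Fin d)))) := by
    apply hf.comp
    exact ((Real.continuous_sqrt.comp continuous_fst).smul
      (continuous_subtype_val.comp continuous_snd)).measurable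
  have hΦm : Measurable (fun l : ℝ => ∫⁻ θ, f (Real.sqrt l • (θ : EuclideanSpace ℝ (Fin d)))
      ∂(uniformSphere d)) := by
    apply Measurable.lintegral_prod_right
    exact hsm
  rw [lintegral_prod _ hsm.aemeasurable]
  rw [betaPrime]
  have hgm : Measurable (fun x : ℝ => ENNReal.ofReal
      (Set.indicator (Set.Ici 0) q x)) := (hqm.indicator measurableSet_Ici).ennreal_ofReal
  rw [lintegral_withDensity_eq_lintegral_mul _ hgm hΦm]
  simp only [Pi.mul_apply]
  have hind : ∀ l : ℝ, ENNReal.ofReal (Set.indicator (Set.Ici 0) q l) *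
      (∫⁻ θ, f (Real.sqrt l • (θ : EuclideanSpace ℝ (Fin d))) ∂(uniformSphere d)) =
      Set.indicator (Set.Ici 0) (fun l => ENNReal.ofReal (q l) *
        (∫⁻ θ, f (Real.sqrt l • (θ : EuclideanSpace ℝ (Fin d))) ∂(uniformSphere d))) l := by
    intro l
    by_cases h : l ∈ Set.Ici (0:ℝ)
    · rw [Set.indicator_of_mem h, Set.indicator_of_mem h]
    · rw [Set.indicator_of_notMem h, Set.indicator_of_notMem h, ENNReal.ofReal_zero, zero_mul]
  rw [lintegral_congr hind, lintegral_indicator measurableSet_Ici,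
    ← Measure.restrict_congr_set Ioi_ae_eq_Ici]
  conv_lhs => rw [← aux_sq_image]
  have hderiv : ∀ x ∈ Ioi (0:ℝ), HasFDerivWithinAt (fun r : ℝ => r ^ 2)
      (ContinuousLinearMap.smulRight (1 : ℝ →L[ℝ] ℝ) (2 * x)) (Ioi 0) x := by
    intro x _
    have : HasDerivAt (fun r : ℝ => r ^ 2) (2 * x) x := by
      simpa using hasDerivAt_pow 2 x
    exact this.hasDerivWithinAt.hasFDerivWithinAt
  have hinj : Set.InjOn (fun r : ℝ => r ^ 2) (Ioi 0) := by
    intro a ha b hb h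
    have := Real.sqrt_sq (le_of_lt ha)
    rw [← Real.sqrt_sq (le_of_lt ha), ← Real.sqrt_sq (le_of_lt hb)]
    simp only at h
    rw [h]
  rw [lintegral_image_eq_lintegral_abs_det_fderiv_mul volume measurableSet_Ioi hderiv hinj]
  simp only [ContinuousLinearMap.smulRight_one_eq_toSpanSingleton, ContinuousLinearMap.det_toSpanSingleton]
  refine setLIntegral_congr_fun (measurableSet_Ioi : MeasurableSet (Ioi (0:ℝ)))
    ?_
  intro r hr
  have hr0 : (0:ℝ) < r := hr
  beta_reduce
  rw [Real.sqrt_sq hr0.le, hus, lintegral_smul_measure, smul_eq_mul]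

lemma aux_core (d : ℕ) (hd : 1 ≤ d) :
    Measure.map (fun p : ℝ × (Metric.sphere (0 : EuclideanSpace ℝ (Fin d)) 1) =>
        Real.sqrt p.1 • (p.2 : EuclideanSpace ℝ (Fin d)))
      ((betaPrime ((d : ℝ) / 2) (1 / 2)).prod (uniformSphere d)) = multivariateCauchyStd d := by
  have hgm : Measurable (fun p : ℝ × (Metric.sphere (0 : EuclideanSpace ℝ (Fin d)) 1) =>
      Real.sqrt p.1 • (p.2 : EuclideanSpace ℝ (Fin d))) :=
    ((Real.continuous_sqrt.comp continuous_fst).smul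
      (continuous_subtype_val.comp continuous_snd)).measurable
  ext s hs
  rw [Measure.map_apply hgm hs, multivariateCauchyStd, withDensity_apply _ hs]
  set f : EuclideanSpace ℝ (Fin d) → ℝ≥0∞ := s.indicator (fun _ => 1) with hfdef
  have hfm : Measurable f := measurable_const.indicator hs
  -- LHS as a lintegral
  have hLHS : ((betaPrime ((d : ℝ) / 2) (1 / 2)).prod (uniformSphere d))
      ((fun p : ℝ × (Metric.sphere (0 : EuclideanSpace ℝ (Fin d)) 1) =>
        Real.sqrt p.1 • (p.2 : EuclideanSpace ℝ (Fin d))) ⁻¹' s) =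
      ∫⁻ p : ℝ × (Metric.sphere (0 : EuclideanSpace ℝ (Fin d)) 1),
        f (Real.sqrt p.1 • (p.2 : EuclideanSpace ℝ (Fin d)))
        ∂((betaPrime ((d : ℝ) / 2) (1 / 2)).prod (uniformSphere d)) := by
    have : (fun p : ℝ × (Metric.sphere (0 : EuclideanSpace ℝ (Fin d)) 1) =>
        f (Real.sqrt p.1 • (p.2 : EuclideanSpace ℝ (Fin d)))) =
        ((fun p : ℝ × (Metric.sphere (0 : EuclideanSpace ℝ (Fin d)) 1) =>
          Real.sqrt p.1 • (p.2 : EuclideanSpace ℝ (Fin d))) ⁻¹' s).indicator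
          (fun _ => (1:ℝ≥0∞)) := by
      ext p
      by_cases h : Real.sqrt p.1 • (p.2 : EuclideanSpace ℝ (Fin d)) ∈ s <;>
        simp [hfdef, h, Set.indicator_apply, Set.mem_preimage]
    rw [this, lintegral_indicator (hgm hs), setLIntegral_one]
  -- RHS as a lintegral
  have hRHS : (∫⁻ x in s, ENNReal.ofReal
      (Real.Gamma (((d : ℝ) + 1) / 2) * Real.pi ^ (-(((d : ℝ) + 1) / 2)) *
        (1 + ‖x‖ ^ 2) ^ (-(((d : ℝ) + 1) / 2))) ∂volume) =
      ∫⁻ x, ENNReal.ofReal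
        (Real.Gamma (((d : ℝ) + 1) / 2) * Real.pi ^ (-(((d : ℝ) + 1) / 2)) *
          (1 + ‖x‖ ^ 2) ^ (-(((d : ℝ) + 1) / 2))) * f x ∂volume := by
    rw [show (fun x => ENNReal.ofReal
        (Real.Gamma (((d : ℝ) + 1) / 2) * Real.pi ^ (-(((d : ℝ) + 1) / 2)) *
          (1 + ‖x‖ ^ 2) ^ (-(((d : ℝ) + 1) / 2))) * f x) =
      s.indicator (fun x => ENNReal.ofReal
        (Real.Gamma (((d : ℝ) + 1) / 2) * Real.pi ^ (-(((d : ℝ) + 1) / 2)) *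
          (1 + ‖x‖ ^ 2) ^ (-(((d : ℝ) + 1) / 2)))) from ?_, lintegral_indicator hs]
    ext x
    by_cases h : x ∈ s <;> simp [hfdef, h, Set.indicator_apply]
  rw [hLHS, hRHS, aux_beta_side d hd f hfm, aux_cauchy_polar d hd f hfm]
  -- swap the iterated integrals on the Cauchy side
  set ν := (volume : Measure (EuclideanSpace ℝ (Fin d))).toSphere with hν
  set c : ℝ → ℝ≥0∞ := fun r => ENNReal.ofReal
    (Real.Gamma (((d : ℝ) + 1) / 2) * Real.pi ^ (-(((d : ℝ) + 1) / 2)) *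
      (1 + r ^ 2) ^ (-(((d : ℝ) + 1) / 2))) with hc
  have hcm : Measurable c := by
    apply Measurable.ennreal_ofReal
    exact measurable_const.mul ((measurable_const.add (measurable_id.pow_const 2)).pow_const _)
  have hswap : (∫⁻ θ, (∫⁻ r in Ioi (0:ℝ), ENNReal.ofReal (r ^ (d - 1)) *
        (c r * f (r • (θ : EuclideanSpace ℝ (Fin d))))) ∂ν) =
      ∫⁻ r in Ioi (0:ℝ), (∫⁻ θ, ENNReal.ofReal (r ^ (d - 1)) *
        (c r * f (r • (θ : EuclideanSpace ℝ (Fin d)))) ∂ν) := by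
    refine lintegral_lintegral_swap ?_
    apply Measurable.aemeasurable
    apply Measurable.mul
    · exact (measurable_snd.pow_const _).ennreal_ofReal
    · exact (hcm.comp measurable_snd).mul (hfm.comp
        ((continuous_snd.smul
          (continuous_subtype_val.comp continuous_fst)).measurable))
  rw [hswap]
  set C := ENNReal.ofReal (2 * π ^ ((d : ℝ) / 2) / Real.Gamma ((d : ℝ) / 2)) with hC
  refine setLIntegral_congr_fun (measurableSet_Ioi : MeasurableSet (Ioi (0:ℝ)))
    ?_
  intro r hr
  have hr0 : (0:ℝ) < r := hr
  beta_reduce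
  have hm3 : Measurable (fun θ : Metric.sphere (0 : EuclideanSpace ℝ (Fin d)) 1 =>
      f (r • (θ : EuclideanSpace ℝ (Fin d)))) :=
    hfm.comp (continuous_subtype_val.const_smul r).measurable
  rw [lintegral_const_mul _ (hm3.const_mul (c r)), lintegral_const_mul _ hm3]
  set I := ∫⁻ θ, f (r • (θ : EuclideanSpace ℝ (Fin d))) ∂ν with hI
  have hd2 : (0:ℝ) < (d : ℝ) / 2 := by positivity
  have hG1 : 0 < Real.Gamma ((d : ℝ) / 2) := Real.Gamma_pos_of_pos hd2
  have hG3 : 0 < Real.Gamma ((d : ℝ) / 2 + 1 / 2) := Real.Gamma_pos_of_pos (by positivity)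
  have hG4 : 0 < Real.Gamma (1 / 2 : ℝ) := Real.Gamma_pos_of_pos (by norm_num)
  have hqnn : 0 ≤ (r ^ 2) ^ ((d : ℝ) / 2 - 1) * (1 + r ^ 2) ^ (-((d : ℝ) / 2) - 1 / 2) /
      (Real.Gamma ((d : ℝ) / 2) * Real.Gamma (1 / 2) / Real.Gamma ((d : ℝ) / 2 + 1 / 2)) := by
    apply div_nonneg
    · exact mul_nonneg (Real.rpow_nonneg (by positivity) _) (Real.rpow_nonneg (by positivity) _)
    · positivity
  have key : ENNReal.ofReal |2 * r| *
      (ENNReal.ofReal ((r ^ 2) ^ ((d : ℝ) / 2 - 1) * (1 + r ^ 2) ^ (-((d : ℝ) / 2) - 1 / 2) /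
        (Real.Gamma ((d : ℝ) / 2) * Real.Gamma (1 / 2) / Real.Gamma ((d : ℝ) / 2 + 1 / 2))) *
        C⁻¹) = ENNReal.ofReal (r ^ (d - 1)) * c r := by
    rw [hC, ← ENNReal.ofReal_inv_of_pos (aux_mass_pos d hd), hc,
      ← ENNReal.ofReal_mul hqnn, ← ENNReal.ofReal_mul (abs_nonneg _),
      ← ENNReal.ofReal_mul (by positivity : (0:ℝ) ≤ r ^ (d - 1))]
    congr 1
    linear_combination aux_real d hd r hr0
  calc ENNReal.ofReal |2 * r| *
      (ENNReal.ofReal ((r ^ 2) ^ ((d : ℝ) / 2 - 1) * (1 + r ^ 2) ^ (-((d : ℝ) / 2) - 1 / 2) /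
        (Real.Gamma ((d : ℝ) / 2) * Real.Gamma (1 / 2) / Real.Gamma ((d : ℝ) / 2 + 1 / 2))) *
        (C⁻¹ * I)) =
      (ENNReal.ofReal |2 * r| *
      (ENNReal.ofReal ((r ^ 2) ^ ((d : ℝ) / 2 - 1) * (1 + r ^ 2) ^ (-((d : ℝ) / 2) - 1 / 2) /
        (Real.Gamma ((d : ℝ) / 2) * Real.Gamma (1 / 2) / Real.Gamma ((d : ℝ) / 2 + 1 / 2))) *
        C⁻¹)) * I := by ring
    _ = (ENNReal.ofReal (r ^ (d - 1)) * c r) * I := by rw [key]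
    _ = ENNReal.ofReal (r ^ (d - 1)) * (c r * I) := by ring

end Aux

/-- **ORF sampling identity for the Cauchy distribution.** If `Θ` is uniform on the
unit sphere `S^{d-1}` and `L ~ BetaPrime(d/2, 1/2)` is independent of `Θ`, then
`√L·Θ` has the multivariate Cauchy `Cauchy(0_d, I_d)` distribution. -/
theorem sqrt_betaPrime_times_uniform_direction_eq_cauchy
    {Ω : Type*} [MeasurableSpace Ω] (P : Measure Ω) [IsProbabilityMeasure P]
    (d : ℕ) (hd : 1 ≤ d)
    (Θ : Ω → Metric.sphere (0 : EuclideanSpace ℝ (Fin d)) 1) (L : Ω → ℝ)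
    (hΘ : Measurable Θ) (hL : Measurable L) (hL0 : ∀ᵐ ω ∂P, 0 ≤ L ω)
    (hΘlaw : Measure.map Θ P = uniformSphere d)
    (hLlaw : Measure.map L P = betaPrime ((d : ℝ) / 2) (1 / 2))
    (hindep : IndepFun L Θ P) :
    Measure.map (fun ω => Real.sqrt (L ω) • (Θ ω : EuclideanSpace ℝ (Fin d))) P =
      multivariateCauchyStd d := by
  have hgm : Measurable (fun p : ℝ × (Metric.sphere (0 : EuclideanSpace ℝ (Fin d)) 1) =>
      Real.sqrt p.1 • (p.2 : EuclideanSpace ℝ (Fin d))) :=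
    ((Real.continuous_sqrt.comp continuous_fst).smul
      (continuous_subtype_val.comp continuous_snd)).measurable
  have hpair : Measure.map (fun ω => (L ω, Θ ω)) P =
      (betaPrime ((d : ℝ) / 2) (1 / 2)).prod (uniformSphere d) := by
    rw [← hLlaw, ← hΘlaw]
    exact (ProbabilityTheory.indepFun_iff_map_prod_eq_prod_map_map
      hL.aemeasurable hΘ.aemeasurable).mp hindep
  calc Measure.map (fun ω => Real.sqrt (L ω) • (Θ ω : EuclideanSpace ℝ (Fin d))) P
      = Measure.map ((fun p : ℝ × (Metric.sphere (0 : EuclideanSpace ℝ (Fin d)) 1) =>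
          Real.sqrt p.1 • (p.2 : EuclideanSpace ℝ (Fin d))) ∘ (fun ω => (L ω, Θ ω))) P := rfl
    _ = Measure.map (fun p : ℝ × (Metric.sphere (0 : EuclideanSpace ℝ (Fin d)) 1) =>
          Real.sqrt p.1 • (p.2 : EuclideanSpace ℝ (Fin d)))
          (Measure.map (fun ω => (L ω, Θ ω)) P) :=
        (Measure.map_map hgm (hL.prodMk hΘ)).symm
    _ = multivariateCauchyStd d := by rw [hpair, aux_core d hd]
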